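/- There is no integer x with gcd(x, 96) = 1 such that the reflexive modular reduction of x·{1, 2, 47} modulo 96 equals {2, 23, 25}. -/

import Mathlib

/-- Reflexive modular reduction of `r` modulo `n`: `min (r mod n, n - r mod n)`. -/
def reflRed (n : ℕ) (r : ℤ) : ℤ := min (r % (n : ℤ)) ((n : ℤ) - r % (n : ℤ))

/-- Reflexive reduction of the set `x • R` modulo `n`. -/
def reflRedSet (n : ℕ) (x : ℤ) (R : Finset ℤ) : Finset ℤ :=
  R.image (fun r => reflRed n (x * r))

/-- The circulant graph `C_n(S)` on `ZMod n`. -/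
def circulant (n : ℕ) (S : Finset ℤ) : SimpleGraph (ZMod n) where
  Adj a b := a ≠ b ∧ ∃ s ∈ S, a - b = (s : ZMod n) ∨ a - b = -(s : ZMod n)
  symm := by
    constructor
    rintro a b ⟨hab, s, hs, h⟩
    refine ⟨hab.symm, s, hs, ?_⟩
    have hba : b - a = -(a - b) := (neg_sub a b).symm
    rcases h with h | h
    · right; rw [hba, h]
    · left; rw [hba, h, neg_neg]
  loopless := by constructor; rintro a ⟨h, -⟩; exact h rfl

/-!
Reflexive reduction modulo `n` only forgets the sign of a residue, so the reduction of `2x`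
is determined by that of `x`. If the reduction of `x · {1, 2, 47}` modulo `96` were
`{2, 23, 25}`, the reduction of `x` would be one of `2, 23, 25`, forcing the reduction of `2x`
to be `4` or `46`, neither of which lies in `{2, 23, 25}`.
-/

section ReflRed

variable {n : ℕ}

theorem reflRed_congr {r s : ℤ} (h : r ≡ s [ZMOD n]) : reflRed n r = reflRed n s := by
  unfold reflRed
  rw [h.eq]

theorem reflRed_neg (r : ℤ) : reflRed n (-r) = reflRed n r := by
  unfold reflRed
  rw [Int.neg_emod, Int.natAbs_natCast]
  split_ifs with h
  · rw [Int.emod_eq_zero_of_dvd h]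
  · rw [sub_sub_cancel, min_comm]

theorem reflRed_modEq_or_modEq_neg (r : ℤ) :
    reflRed n r ≡ r [ZMOD n] ∨ reflRed n r ≡ -r [ZMOD n] := by
  unfold reflRed
  have hr := Int.mod_modEq r n
  rcases min_choice (r % n) (n - r % n) with h | h <;> rw [h]
  · exact Or.inl hr
  · simpa using Or.inr (Int.modulus_modEq_zero.sub hr)

theorem reflRed_mul_reflRed (a r : ℤ) : reflRed n (a * reflRed n r) = reflRed n (a * r) := by
  rcases reflRed_modEq_or_modEq_neg (n := n) r with h | h
  · exact reflRed_congr (h.mul_left a)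
  · rw [reflRed_congr (h.mul_left a), mul_neg, reflRed_neg]

end ReflRed

theorem stmt16 :
    ¬ ∃ x : ℤ, Int.gcd x 96 = 1 ∧
      reflRedSet 96 x ({1, 2, 47} : Finset ℤ) = {2, 23, 25} := by
  rintro ⟨x, -, hx⟩
  have mem_of_mem {r : ℤ} (hr : r ∈ ({1, 2, 47} : Finset ℤ)) :
      reflRed 96 (x * r) ∈ ({2, 23, 25} : Finset ℤ) :=
    hx ▸ Finset.mem_image_of_mem _ hr
  have hx1 : reflRed 96 x ∈ ({2, 23, 25} : Finset ℤ) := by simpa using mem_of_mem (r := 1)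
  have hx2 : reflRed 96 (2 * reflRed 96 x) ∈ ({2, 23, 25} : Finset ℤ) := by
    rw [reflRed_mul_reflRed, mul_comm]
    exact mem_of_mem (by decide)
  simp only [Finset.mem_insert, Finset.mem_singleton] at hx1
  rcases hx1 with h | h | h <;> rw [h] at hx2 <;> revert hx2 <;> decide
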